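/- Let F ∈ C²([0,T)) satisfy F(t) ≥ 0, F(0) = 0, F'(0) = C > 0, and F''(t) ≥ K F(t)² with K > 0. Then F'(t) ≥ √((2K/3) F(t)³ + C²) for all t ∈ [0,T), and consequently F blows up in finite time: T ≤ (3C²/(2K))^{1/3} C^{−1} · ∫_0^∞ dy/√(y³+1). In particular no such F exists on [0, ∞). -/

import Mathlib

open MeasureTheory Filter Set Real

noncomputable def rcf (y : ℝ) : ℝ := (Real.sqrt (y ^ 3 + 1))⁻¹

lemma rcf_nonneg (y : ℝ) : 0 ≤ rcf y := inv_nonneg.2 (Real.sqrt_nonneg _)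

lemma rcf_contOn : ContinuousOn rcf (Set.Ioi (-1 : ℝ)) := by
  intro x hx
  have hx' : (0:ℝ) < x ^ 3 + 1 := by
    have h : (-1:ℝ) < x := hx
    have h2 : (0:ℝ) < x ^ 2 - x + 1 := by nlinarith [sq_nonneg (2*x-1)]
    nlinarith [mul_pos (by linarith : (0:ℝ) < x + 1) h2]
  exact (((continuousAt_id.pow 3).add continuousAt_const).sqrt.inv₀
    (ne_of_gt (Real.sqrt_pos.2 hx'))).continuousWithinAt

lemma rcf_contAt {x : ℝ} (hx : 0 ≤ x) : ContinuousAt rcf x := by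
  have hx' : (0:ℝ) < x ^ 3 + 1 := by nlinarith [pow_nonneg hx 3]
  exact ((continuousAt_id.pow 3).add continuousAt_const).sqrt.inv₀
    (ne_of_gt (Real.sqrt_pos.2 hx'))

lemma rcf_integrable : IntegrableOn rcf (Set.Ioi (0:ℝ)) := by
  have h1 : IntegrableOn rcf (Set.Ioc (0:ℝ) 1) := by
    have : ContinuousOn rcf (Set.Icc (0:ℝ) 1) :=
      rcf_contOn.mono (fun y hy => lt_of_lt_of_le (by norm_num) hy.1)
    exact (this.integrableOn_Icc).mono_set Set.Ioc_subset_Icc_self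
  rw [← Set.Ioc_union_Ioi_eq_Ioi (zero_le_one : (0:ℝ) ≤ 1)]
  refine h1.union ?_
  have h2 : IntegrableOn rcf (Set.Ioi (1:ℝ)) := by
    have hg : IntegrableOn (fun y : ℝ => y ^ (-(3:ℝ)/2)) (Set.Ioi 1) :=
      integrableOn_Ioi_rpow_of_lt (by norm_num) one_pos
    apply Integrable.mono' hg
    · exact (rcf_contOn.mono (fun y hy => lt_trans (by norm_num) hy)).aestronglyMeasurable
        measurableSet_Ioi
    · filter_upwards [ae_restrict_mem measurableSet_Ioi] with y hy
      have hy1 : (1:ℝ) < y := hy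
      have hy0 : (0:ℝ) ≤ y := by linarith
      have hsq : Real.sqrt (y ^ 3) = y ^ ((3:ℝ)/2) := by
        rw [Real.sqrt_eq_rpow, ← Real.rpow_natCast y 3, ← Real.rpow_mul hy0]
        norm_num
      have hle : Real.sqrt (y ^ 3) ≤ Real.sqrt (y ^ 3 + 1) :=
        Real.sqrt_le_sqrt (by linarith)
      have hpos : 0 < Real.sqrt (y ^ 3) := by
        rw [hsq]; exact Real.rpow_pos_of_pos (by linarith) _
      rw [Real.norm_eq_abs, abs_of_nonneg (rcf_nonneg y)]
      have : rcf y ≤ (Real.sqrt (y ^ 3))⁻¹ := by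
        exact inv_anti₀ hpos hle
      refine this.trans ?_
      rw [hsq, ← Real.rpow_neg hy0]
      norm_num
  exact h2

lemma rcf_hasDeriv {x : ℝ} (hx : 0 ≤ x) :
    HasDerivAt (fun u => ∫ y in (0:ℝ)..u, rcf y) (rcf x) x := by
  apply intervalIntegral.integral_hasDerivAt_right
  · apply ContinuousOn.intervalIntegrable
    apply rcf_contOn.mono
    intro y hy
    rcases Set.mem_uIcc.1 hy with h | h
    · exact lt_of_lt_of_le (by norm_num) h.1
    · exact lt_of_lt_of_le (by linarith [h.1]) h.1
  · exact rcf_contOn.stronglyMeasurableAtFilter isOpen_Ioi x (by simpa using by linarith : x ∈ Set.Ioi (-1:ℝ))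
  · exact rcf_contAt hx

lemma monoOn_aux {g g' : ℝ → ℝ} {T : ℝ}
    (hd : ∀ t ∈ Set.Ico (0:ℝ) T, HasDerivAt g (g' t) t)
    (h0 : ∀ t ∈ Set.Ico (0:ℝ) T, 0 ≤ g' t) : MonotoneOn g (Set.Ico 0 T) := by
  apply monotoneOn_of_deriv_nonneg (convex_Ico 0 T)
  · exact fun t ht => (hd t ht).continuousAt.continuousWithinAt
  · rw [interior_Ico]
    exact fun t ht => ((hd t ⟨ht.1.le, ht.2⟩).differentiableAt).differentiableWithinAt
  · rw [interior_Ico]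
    intro t ht
    rw [(hd t ⟨ht.1.le, ht.2⟩).deriv]
    exact h0 t ⟨ht.1.le, ht.2⟩


/-- Riccati-type ODE blowup lemma: if `F ≥ 0`, `F(0) = 0`, `F'(0) = C > 0` and
`F'' ≥ K F²` with `K > 0` on `[0,T)`, then `F' ≥ √((2K/3)F³ + C²)` on `[0,T)` and
`T ≤ (3C²/(2K))^{1/3} C⁻¹ ∫_0^∞ dy/√(y³+1)`. In particular no such `F` exists on `[0,∞)`. -/
theorem riccati_blowup (F F' F'' : ℝ → ℝ) (T C K : ℝ) (hT : 0 < T)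
    (hC : 0 < C) (hK : 0 < K)
    (hd1 : ∀ t ∈ Set.Ico (0 : ℝ) T, HasDerivAt F (F' t) t)
    (hd2 : ∀ t ∈ Set.Ico (0 : ℝ) T, HasDerivAt F' (F'' t) t)
    (hpos : ∀ t ∈ Set.Ico (0 : ℝ) T, 0 ≤ F t)
    (hF0 : F 0 = 0) (hF'0 : F' 0 = C)
    (hineq : ∀ t ∈ Set.Ico (0 : ℝ) T, F'' t ≥ K * (F t) ^ 2) :
    (∀ t ∈ Set.Ico (0 : ℝ) T,
      F' t ≥ Real.sqrt ((2 * K / 3) * (F t) ^ 3 + C ^ 2)) ∧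
    T ≤ (3 * C ^ 2 / (2 * K)) ^ ((1 : ℝ) / 3) * C⁻¹ *
      ∫ y in Set.Ioi (0 : ℝ), (Real.sqrt (y ^ 3 + 1))⁻¹ := by
  have h0mem : (0:ℝ) ∈ Set.Ico (0:ℝ) T := ⟨le_refl 0, hT⟩
  -- Step A : F' ≥ C on [0,T)
  have hF'mono : MonotoneOn F' (Set.Ico 0 T) :=
    monoOn_aux hd2 (fun t ht => le_trans (by positivity) (hineq t ht))
  have hF'ge : ∀ t ∈ Set.Ico (0:ℝ) T, C ≤ F' t := by
    intro t ht
    have := hF'mono h0mem ht ht.1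
    rwa [hF'0] at this
  -- Step B : first inequality
  have hmain : ∀ t ∈ Set.Ico (0:ℝ) T,
      F' t ≥ Real.sqrt ((2 * K / 3) * (F t) ^ 3 + C ^ 2) := by
    intro t ht
    set G : ℝ → ℝ := fun s => F' s ^ 2 - (2 * K / 3) * F s ^ 3 - C ^ 2 with hG
    have hGd : ∀ s ∈ Set.Ico (0:ℝ) T, HasDerivAt G
        (2 * F' s ^ 1 * F'' s - 2 * K / 3 * (3 * F s ^ 2 * F' s)) s := by
      intro s hs
      exact ((((hd2 s hs).pow 2).sub (((hd1 s hs).pow 3).const_mul (2*K/3))).sub_const (C^2))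
    have hG0 : G 0 = 0 := by simp [hG, hF0, hF'0]
    have hGmono : MonotoneOn G (Set.Ico 0 T) := by
      apply monoOn_aux hGd
      intro s hs
      have h1 : C ≤ F' s := hF'ge s hs
      have h2 : K * F s ^ 2 ≤ F'' s := hineq s hs
      nlinarith [mul_nonneg (by linarith : (0:ℝ) ≤ F' s) (by linarith : (0:ℝ) ≤ F'' s - K * F s ^ 2)]
    have hGt : 0 ≤ G t := by
      have := hGmono h0mem ht ht.1
      rwa [hG0] at this
    have hsq : (2 * K / 3) * F t ^ 3 + C ^ 2 ≤ (F' t) ^ 2 := by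
      simp only [hG] at hGt; linarith
    have hF't : 0 ≤ F' t := le_trans hC.le (hF'ge t ht)
    calc Real.sqrt ((2 * K / 3) * F t ^ 3 + C ^ 2)
        ≤ Real.sqrt ((F' t) ^ 2) := Real.sqrt_le_sqrt hsq
      _ = F' t := Real.sqrt_sq hF't
  refine ⟨hmain, ?_⟩
  -- Step C : blowup bound
  set a : ℝ := (3 * C ^ 2 / (2 * K)) ^ ((1 : ℝ) / 3) with ha
  have haX : (0:ℝ) < 3 * C ^ 2 / (2 * K) := by positivity
  have hapos : 0 < a := Real.rpow_pos_of_pos haX _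
  have ha3 : a ^ 3 = 3 * C ^ 2 / (2 * K) := by
    rw [ha, ← Real.rpow_natCast _ 3, ← Real.rpow_mul haX.le]
    norm_num
  -- basic identity
  have hid : ∀ u : ℝ, 0 ≤ u → (2 * K / 3) * u ^ 3 + C ^ 2 = C ^ 2 * ((u / a) ^ 3 + 1) := by
    intro u hu
    rw [div_pow, ha3]
    field_simp
  set Iint : ℝ → ℝ := fun x => ∫ y in (0:ℝ)..x, rcf y with hIint
  set H : ℝ → ℝ := fun t => Iint (F t / a) - (C / a) * t with hH
  have hHd : ∀ t ∈ Set.Ico (0:ℝ) T,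
      HasDerivAt H (rcf (F t / a) * (F' t / a) - C / a) t := by
    intro t ht
    have hFa : 0 ≤ F t / a := div_nonneg (hpos t ht) hapos.le
    have h1 : HasDerivAt (fun s => Iint (F s / a)) (rcf (F t / a) * (F' t / a)) t :=
      by have := (rcf_hasDeriv hFa).comp t ((hd1 t ht).div_const a); exact this
    have h2 : HasDerivAt (fun s : ℝ => (C / a) * s) (C / a) t := by
      simpa using (hasDerivAt_id t).const_mul (C / a)
    exact h1.sub h2
  have hHmono : MonotoneOn H (Set.Ico 0 T) := by
    apply monoOn_aux hHd
    intro t ht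
    have hFa : 0 ≤ F t / a := div_nonneg (hpos t ht) hapos.le
    have hY : (0:ℝ) < (F t / a) ^ 3 + 1 := by nlinarith [pow_nonneg hFa 3]
    have hsY : 0 < Real.sqrt ((F t / a) ^ 3 + 1) := Real.sqrt_pos.2 hY
    have hge : C * Real.sqrt ((F t / a) ^ 3 + 1) ≤ F' t := by
      have := hmain t ht
      rw [hid (F t) (hpos t ht), Real.sqrt_mul (sq_nonneg C), Real.sqrt_sq hC.le] at this
      exact this
    have h4 : C * Real.sqrt ((F t / a) ^ 3 + 1) / a ≤ F' t / a := by gcongr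
    have h5 := mul_le_mul_of_nonneg_left h4 (inv_nonneg.2 hsY.le)
    have h6 : C / a ≤ rcf (F t / a) * (F' t / a) := by
      rw [rcf]
      calc C / a = (Real.sqrt ((F t / a) ^ 3 + 1))⁻¹ *
            (C * Real.sqrt ((F t / a) ^ 3 + 1) / a) := by
              rw [show (Real.sqrt ((F t / a) ^ 3 + 1))⁻¹ *
                (C * Real.sqrt ((F t / a) ^ 3 + 1) / a) =
                C * ((Real.sqrt ((F t / a) ^ 3 + 1))⁻¹ *
                  Real.sqrt ((F t / a) ^ 3 + 1)) / a by ring,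
                inv_mul_cancel₀ hsY.ne', mul_one]
        _ ≤ _ := h5
    linarith
  -- H t ≥ 0, i.e. (C/a) t ≤ Iint (F t / a)
  have hIinf : ∀ t ∈ Set.Ico (0:ℝ) T, (C / a) * t ≤ ∫ y in Set.Ioi (0:ℝ), rcf y := by
    intro t ht
    have hH0 : H 0 = 0 := by simp [hH, hF0, hIint]
    have hHt : 0 ≤ H t := by
      have := hHmono h0mem ht ht.1
      rwa [hH0] at this
    have hFa : 0 ≤ F t / a := div_nonneg (hpos t ht) hapos.le
    have hIle : Iint (F t / a) ≤ ∫ y in Set.Ioi (0:ℝ), rcf y := by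
      show (∫ y in (0:ℝ)..(F t / a), rcf y) ≤ ∫ y in Set.Ioi (0:ℝ), rcf y
      rw [intervalIntegral.integral_of_le hFa]
      apply setIntegral_mono_set rcf_integrable
      · exact Filter.Eventually.of_forall (fun y => rcf_nonneg y)
      · exact HasSubset.Subset.eventuallyLE Set.Ioc_subset_Ioi_self
    simp only [hH] at hHt
    linarith
  -- conclude
  have hInt_nonneg : 0 ≤ ∫ y in Set.Ioi (0:ℝ), rcf y :=
    setIntegral_nonneg measurableSet_Ioi (fun y _ => rcf_nonneg y)
  have hgoal : T ≤ a * C⁻¹ * ∫ y in Set.Ioi (0:ℝ), rcf y := by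
    by_contra hcon
    push_neg at hcon
    set B : ℝ := a * C⁻¹ * ∫ y in Set.Ioi (0:ℝ), rcf y with hB
    have hB0 : 0 ≤ B := by positivity
    set t : ℝ := (B + T) / 2 with htdef
    have htmem : t ∈ Set.Ico (0:ℝ) T := ⟨by positivity, by rw [htdef]; linarith⟩
    have h1 := hIinf t htmem
    have h2 : t ≤ B := by
      rw [hB]
      have : t = (a * C⁻¹) * ((C / a) * t) := by field_simp
      rw [this]
      exact mul_le_mul_of_nonneg_left h1 (by positivity)
    have : B < t := by rw [htdef]; linarith
    linarith
  simpa [rcf] using hgoal
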